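/- Let 0 < α < δ < 1/2. Then, as x₀ → +∞, ∫_{−∞}^{x₀^α} ∫_{|x'| < ε (x₀−t)^{1/2}} exp( −½ x'·Q x' + E(x', x₀ − t) ) · ν( t, x'/(x₀−t)^{1/2} ) · ( (1 − t/x₀)^{−(d−1)/2} − 1 ) dx' dt = o(x₀^{δ − 1/2}). -/

import Mathlib

open Metric MeasureTheory Filter Asymptotics
open scoped Topology

/-!
Since `t ≤ x₀ ^ α = o(x₀)`, the factor `(1 - t/x₀) ^ (-(d-1)/2) - 1` is `O(|t| / x₀)` by the mean
value theorem. The exponential is dominated by the Gaussian `exp (-(γ/4)|x'|²)` and the decay of `ν`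
absorbs the extra `|t|`, so the double integral is `O(1/x₀)`, which is `o(x₀ ^ (δ - 1/2))` as soon
as `δ > -1/2`.
-/

theorem Real.isLittleO_rpow_rpow_atTop {a b : ℝ} (h : a < b) :
    (fun x : ℝ => x ^ a) =o[atTop] fun x => x ^ b := by
  rw [isLittleO_iff_tendsto']
  · refine (tendsto_rpow_neg_atTop (sub_pos.2 h)).congr' ?_
    filter_upwards [eventually_gt_atTop 0] with x hx
    rw [neg_sub, Real.rpow_sub hx]
  · filter_upwards [eventually_gt_atTop 0] with x hx h0
    exact absurd h0 (Real.rpow_pos_of_pos hx b).ne'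

theorem abs_one_sub_rpow_sub_one_le {q s : ℝ} (hq : q ≤ 0) (hs : s ≤ 1 / 2) :
    |(1 - s) ^ q - 1| ≤ -q * 2 ^ (1 - q) * |s| := by
  have hderiv : ∀ x ∈ Set.Ici (1 / 2 : ℝ),
      HasDerivWithinAt (fun x : ℝ => x ^ q) (q * x ^ (q - 1)) (Set.Ici (1 / 2)) x :=
    fun x hx => (Real.hasDerivAt_rpow_const (Or.inl (by linarith [hx.out]))).hasDerivWithinAt
  have hbound : ∀ x ∈ Set.Ici (1 / 2 : ℝ), ‖q * x ^ (q - 1)‖ ≤ -q * 2 ^ (1 - q) := by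
    intro x hx
    have hx0 : 0 < x := by linarith [hx.out]
    rw [norm_mul, Real.norm_of_nonpos hq, Real.norm_of_nonneg (by positivity)]
    refine mul_le_mul_of_nonneg_left ?_ (neg_nonneg.2 hq)
    calc x ^ (q - 1) ≤ (1 / 2) ^ (q - 1) :=
          Real.rpow_le_rpow_of_nonpos (by norm_num) hx (by linarith)
      _ = 2 ^ (1 - q) := by
        rw [one_div, Real.inv_rpow zero_le_two, ← Real.rpow_neg zero_le_two, neg_sub]
  have := Convex.norm_image_sub_le_of_norm_hasDerivWithin_le hderiv hbound (convex_Ici _)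
    (Set.mem_Ici.2 (by norm_num : (1 / 2 : ℝ) ≤ 1)) (Set.mem_Ici.2 (by linarith : 1 / 2 ≤ 1 - s))
  simpa [Real.norm_eq_abs, abs_sub_comm] using this

theorem integrable_exp_neg_mul_sq_norm {V : Type*} [NormedAddCommGroup V] [InnerProductSpace ℝ V]
    [FiniteDimensional ℝ V] [MeasurableSpace V] [BorelSpace V] {b : ℝ} (hb : 0 < b) :
    Integrable fun v : V => Real.exp (-b * ‖v‖ ^ 2) := by
  refine (GaussianFourier.integrable_cexp_neg_mul_sq_norm_add (b := (b : ℂ)) (by simpa using hb)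
    0 (0 : V)).norm.congr (.of_forall fun v => ?_)
  simp [Complex.norm_exp, ← Complex.ofReal_pow]

section SetIntegral

variable {α β E : Type*} [MeasurableSpace α] [MeasurableSpace β] [NormedAddCommGroup E]
  [NormedSpace ℝ E] {μ : Measure α} {ν : Measure β}

theorem norm_setIntegral_le_integral_of_norm_le {s : Set α} {f : α → E} {g : α → ℝ}
    (hs : MeasurableSet s) (hg : Integrable g μ) (hg0 : 0 ≤ g) (hfg : ∀ x ∈ s, ‖f x‖ ≤ g x) :
    ‖∫ x in s, f x ∂μ‖ ≤ ∫ x, g x ∂μ :=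
  (norm_integral_le_of_norm_le hg.restrict ((ae_restrict_iff' hs).2 (.of_forall hfg))).trans
    (setIntegral_le_integral hg (.of_forall hg0))

theorem norm_setIntegral_setIntegral_le_mul {s : Set α} {u : α → Set β} {f : α → β → E}
    {g : α → ℝ} {h : β → ℝ} (hs : MeasurableSet s) (hu : ∀ a ∈ s, MeasurableSet (u a))
    (hg : Integrable g μ) (hh : Integrable h ν) (hg0 : 0 ≤ g) (hh0 : 0 ≤ h)
    (hf : ∀ a ∈ s, ∀ b ∈ u a, ‖f a b‖ ≤ g a * h b) :
    ‖∫ a in s, ∫ b in u a, f a b ∂ν ∂μ‖ ≤ (∫ a, g a ∂μ) * ∫ b, h b ∂ν := by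
  rw [← integral_mul_const]
  refine norm_setIntegral_le_integral_of_norm_le hs (hg.mul_const _)
    (fun a => mul_nonneg (hg0 a) (integral_nonneg hh0)) fun a ha => ?_
  rw [← integral_const_mul]
  exact norm_setIntegral_le_integral_of_norm_le (hu a ha) (hh.const_mul _)
    (fun b => mul_nonneg (hg0 a) (hh0 b)) (hf a ha)

end SetIntegral

theorem norm_cexp_neg_half_quadForm_add {n : ℕ} (Q : Matrix (Fin n) (Fin n) ℝ)
    (x : EuclideanSpace ℝ (Fin n)) (z : ℂ) :
    ‖Complex.exp (-(1 / 2 : ℂ) * (∑ i, ∑ j, (Q i j : ℂ) * x i * x j) + z)‖ =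
      Real.exp (-(1 / 2) * (∑ i, ∑ j, Q i j * x i * x j) + z.re) := by
  rw [Complex.norm_exp]
  congr 1
  have : (∑ i, ∑ j, (Q i j : ℂ) * x i * x j) = ((∑ i, ∑ j, Q i j * x i * x j : ℝ) : ℂ) := by
    push_cast; rfl
  rw [this, Complex.add_re]
  norm_num

theorem norm_inv_sqrt_smul_le {V : Type*} [NormedAddCommGroup V] [NormedSpace ℝ V] {ε τ : ℝ}
    {x : V} (hτ : 0 < τ) (hx : ‖x‖ < ε * √τ) : ‖(√τ)⁻¹ • x‖ ≤ ε := by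
  have hsqrt : 0 < √τ := Real.sqrt_pos.2 hτ
  rw [norm_smul, norm_inv, Real.norm_of_nonneg hsqrt.le, inv_mul_le_iff₀ hsqrt, mul_comm]
  exact hx.le

theorem norm_cexp_quadForm_mul_mul_rpow_sub_one_le {n : ℕ} (Q : Matrix (Fin n) (Fin n) ℝ)
    {x : EuclideanSpace ℝ (Fin n)} {z w : ℂ} {γ C q x₀ t : ℝ}
    (hz : -(1 / 2) * (∑ i, ∑ j, Q i j * x i * x j) + z.re ≤ -(γ / 4) * ‖x‖ ^ 2)
    (hC : 0 ≤ C) (hw : ‖w‖ ≤ C * (1 + |t|) ^ (-3 : ℝ)) (hq : q ≤ 0) (hx₀ : 0 < x₀)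
    (ht : t ≤ x₀ / 2) :
    ‖Complex.exp (-(1 / 2 : ℂ) * (∑ i, ∑ j, (Q i j : ℂ) * x i * x j) + z) * w *
        (((1 - t / x₀) ^ q - 1 : ℝ) : ℂ)‖ ≤
      C * (-q * 2 ^ (1 - q)) / x₀ * (1 + |t|) ^ (-2 : ℝ) * Real.exp (-(γ / 4) * ‖x‖ ^ 2) := by
  have hexp := norm_cexp_neg_half_quadForm_add Q x z ▸ Real.exp_le_exp.2 hz
  have hr : |(1 - t / x₀) ^ q - 1| ≤ -q * 2 ^ (1 - q) * (|t| / x₀) := by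
    simpa [abs_div, abs_of_pos hx₀] using
      abs_one_sub_rpow_sub_one_le hq (s := t / x₀) (by rw [div_le_iff₀ hx₀]; linarith)
  have ht1 : 0 < 1 + |t| := by positivity
  have hdecay : (1 + |t|) ^ (-3 : ℝ) * |t| ≤ (1 + |t|) ^ (-2 : ℝ) :=
    calc (1 + |t|) ^ (-3 : ℝ) * |t| ≤ (1 + |t|) ^ (-3 : ℝ) * (1 + |t|) := by gcongr; linarith
      _ = (1 + |t|) ^ (-2 : ℝ) := by rw [← Real.rpow_add_one ht1.ne']; norm_num
  rw [norm_mul, norm_mul, Complex.norm_real, Real.norm_eq_abs]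
  calc _ ≤ Real.exp (-(γ / 4) * ‖x‖ ^ 2) * (C * (1 + |t|) ^ (-3 : ℝ)) *
        (-q * 2 ^ (1 - q) * (|t| / x₀)) := by gcongr
    _ = C * (-q * 2 ^ (1 - q)) / x₀ * ((1 + |t|) ^ (-3 : ℝ) * |t|) *
        Real.exp (-(γ / 4) * ‖x‖ ^ 2) := by ring
    _ ≤ _ := by
      have : 0 ≤ -q := by linarith
      gcongr

theorem stmt_15_general (d : ℕ) (hd : 2 ≤ d) (ε γ : ℝ) (hγ : 0 < γ)
    (Q : Matrix (Fin (d - 1)) (Fin (d - 1)) ℝ)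
    (ν : ℝ × EuclideanSpace ℝ (Fin (d - 1)) → ℂ)
    (hνdecay : ∀ N : ℝ, 0 < N → ∃ C : ℝ, ∀ (t : ℝ) (ξ : EuclideanSpace ℝ (Fin (d - 1))),
      ‖ξ‖ ≤ ε → ‖ν (t, ξ)‖ ≤ C * (1 + |t|) ^ (-N))
    (Efun : EuclideanSpace ℝ (Fin (d - 1)) → ℝ → ℂ)
    (hE : ∀ τ : ℝ, 0 < τ → ∀ x' : EuclideanSpace ℝ (Fin (d - 1)),
      ‖x'‖ < ε * Real.sqrt τ →
      -(1 / 2) * (∑ p, ∑ q, Q p q * x' p * x' q) + (Efun x' τ).re ≤ -(γ / 4) * ‖x'‖ ^ 2)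
    (α δ : ℝ) (hα0 : 0 < α) (hαδ : α < δ) (hδ : δ < 1 / 2) :
    (fun x₀ : ℝ =>
      ∫ t in Set.Iic (x₀ ^ α),
        ∫ x' in ball (0 : EuclideanSpace ℝ (Fin (d - 1))) (ε * Real.sqrt (x₀ - t)),
          Complex.exp (-(1 / 2 : ℂ) * (∑ p, ∑ q, (Q p q : ℂ) * x' p * x' q) +
              Efun x' (x₀ - t)) *
            ν (t, (Real.sqrt (x₀ - t))⁻¹ • x') *
            (((1 - t / x₀) ^ (-((d : ℝ) - 1) / 2) - 1 : ℝ) : ℂ))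
      =o[atTop] fun x₀ : ℝ => x₀ ^ (δ - 1 / 2) := by
  obtain ⟨C, hC⟩ := hνdecay 3 three_pos
  set q : ℝ := -((d : ℝ) - 1) / 2
  have hq : q ≤ 0 := by
    have : (2 : ℝ) ≤ d := by exact_mod_cast hd
    simp only [q]; linarith
  set g : ℝ → ℝ := fun t => (1 + |t|) ^ (-2 : ℝ)
  set h : EuclideanSpace ℝ (Fin (d - 1)) → ℝ := fun v => Real.exp (-(γ / 4) * ‖v‖ ^ 2)
  have hg : Integrable g := by
    simpa only [Real.norm_eq_abs] using
      integrable_one_add_norm (E := ℝ) (μ := volume) (r := 2) (by norm_num)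
  have hh : Integrable h := integrable_exp_neg_mul_sq_norm (by positivity)
  set c : ℝ := |C| * (-q * 2 ^ (1 - q))
  have hc : 0 ≤ c := mul_nonneg (abs_nonneg C) (mul_nonneg (neg_nonneg.2 hq) (by positivity))
  have hsmall : ∀ᶠ x₀ : ℝ in atTop, x₀ ^ α ≤ x₀ / 2 := by
    filter_upwards [(Real.isLittleO_rpow_rpow_atTop (by linarith : α < 1)).bound
      (by norm_num : (0 : ℝ) < 1 / 2), eventually_gt_atTop 0] with x₀ hx hx₀
    rw [Real.rpow_one, Real.norm_of_nonneg (by positivity), Real.norm_of_nonneg hx₀.le] at hx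
    linarith
  refine IsBigO.trans_isLittleO (g := fun x₀ : ℝ => x₀⁻¹) ?_
    ((Real.isLittleO_rpow_rpow_atTop (by linarith : (-1 : ℝ) < δ - 1 / 2)).congr_left
      Real.rpow_neg_one)
  refine IsBigO.of_bound (c * (∫ t, g t) * ∫ v, h v) ?_
  filter_upwards [hsmall, eventually_gt_atTop 0] with x₀ hsmall hx₀
  refine (norm_setIntegral_setIntegral_le_mul (g := fun t => c / x₀ * g t) measurableSet_Iic
    (fun _ _ => measurableSet_ball) (hg.const_mul _) hh (fun t => by positivity)
    (fun v => by positivity) fun t ht x' hx' => ?_).trans_eq ?_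
  · have hτ : 0 < x₀ - t := by linarith [ht.out]
    rw [mem_ball_zero_iff] at hx'
    exact norm_cexp_quadForm_mul_mul_rpow_sub_one_le Q (hE _ hτ x' hx') (abs_nonneg C)
      ((hC t _ (norm_inv_sqrt_smul_le hτ hx')).trans (by gcongr; exact le_abs_self C)) hq hx₀
      (by linarith [ht.out])
  · rw [integral_const_mul, Real.norm_of_nonneg (inv_nonneg.2 hx₀.le)]
    ring

/-- for `0 < α < δ < 1/2`,
`∫_{-∞}^{x₀^α} ∫_{|x'|<ε√(x₀-t)} exp(-½x'·Qx' + E(x',x₀-t)) ν(t,x'/√(x₀-t))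
   ((1-t/x₀)^{-(d-1)/2} - 1) dx' dt = o(x₀^{δ-1/2})` as `x₀ → +∞`. -/
theorem stmt_15 (d : ℕ) (hd : 2 ≤ d) (ε γ : ℝ) (hε : 0 < ε) (hγ : 0 < γ)
    (Q : Matrix (Fin (d - 1)) (Fin (d - 1)) ℝ) (hQsymm : Q.IsSymm) (hQpos : Q.PosDef)
    (hgamQ : ∀ v : EuclideanSpace ℝ (Fin (d - 1)),
      γ * ‖v‖ ^ 2 ≤ ∑ p, ∑ q, Q p q * v p * v q)
    (ν : ℝ × EuclideanSpace ℝ (Fin (d - 1)) → ℂ)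
    (hν : ContinuousOn ν {q : ℝ × EuclideanSpace ℝ (Fin (d - 1)) | ‖q.2‖ ≤ ε})
    (hνdecay : ∀ N : ℝ, 0 < N → ∃ C : ℝ, ∀ (t : ℝ) (ξ : EuclideanSpace ℝ (Fin (d - 1))),
      ‖ξ‖ ≤ ε → ‖ν (t, ξ)‖ ≤ C * (1 + |t|) ^ (-N))
    (Efun : EuclideanSpace ℝ (Fin (d - 1)) → ℝ → ℂ)
    (hE : ∀ τ : ℝ, 0 < τ → ∀ x' : EuclideanSpace ℝ (Fin (d - 1)),
      ‖x'‖ < ε * Real.sqrt τ →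
      -(1 / 2) * (∑ p, ∑ q, Q p q * x' p * x' q) + (Efun x' τ).re ≤ -(γ / 4) * ‖x'‖ ^ 2)
    (α δ : ℝ) (hα0 : 0 < α) (hαδ : α < δ) (hδ : δ < 1 / 2) :
    (fun x₀ : ℝ =>
      ∫ t in Set.Iic (x₀ ^ α),
        ∫ x' in ball (0 : EuclideanSpace ℝ (Fin (d - 1))) (ε * Real.sqrt (x₀ - t)),
          Complex.exp (-(1 / 2 : ℂ) * (∑ p, ∑ q, (Q p q : ℂ) * x' p * x' q) +
              Efun x' (x₀ - t)) *
            ν (t, (Real.sqrt (x₀ - t))⁻¹ • x') *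
            (((1 - t / x₀) ^ (-((d : ℝ) - 1) / 2) - 1 : ℝ) : ℂ))
      =o[atTop] fun x₀ : ℝ => x₀ ^ (δ - 1 / 2) :=
  stmt_15_general d hd ε γ hγ Q ν hνdecay Efun hE α δ hα0 hαδ hδ
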